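/- arXiv:2507.05951 — 3 statements merged into one kernel-verified Lean document; each statement's English description precedes it below -/
import Mathlib

section
/- Let x = 1/3, y = (1-2x)/(m(1+2n)), z = 2my, τ = (x+(m-n)y)/(2x+(m-n)y), where m ≥ n ≥ 1 are naturals. For any natural numbers m' ≤ m and n' with 1 ≤ n' ≤ n, we have (x + m'·y)/(2x + m'·y + n'·z) < τ. -/
theorem stmt_2 (m n m' n' : ℕ) (hn : 1 ≤ n) (hmn : n ≤ m)
    (hm' : m' ≤ m) (hn'1 : 1 ≤ n') (hn' : n' ≤ n)
    (x y z τ : ℝ) (hx : x = 1/3)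
    (hy : y = (1 - 2*x) / (m * (1 + 2*n)))
    (hz : z = 2*m*y)
    (hτ : τ = (x + ((m - n : ℕ) : ℝ)*y) / (2*x + ((m - n : ℕ) : ℝ)*y)) :
    (x + m'*y) / (2*x + m'*y + n'*z) < τ := by
  have hnR : (1:ℝ) ≤ (n:ℝ) := by exact_mod_cast hn
  have hnm : (n:ℝ) ≤ (m:ℝ) := by exact_mod_cast hmn
  have hmR : (1:ℝ) ≤ (m:ℝ) := le_trans hnR hnm
  have hm'R : (m':ℝ) ≤ (m:ℝ) := by exact_mod_cast hm'
  have hm'0 : (0:ℝ) ≤ (m':ℝ) := Nat.cast_nonneg _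
  have hn'R : (1:ℝ) ≤ (n':ℝ) := by exact_mod_cast hn'1
  have hy0 : 0 < y := by
    rw [hy, hx]
    apply div_pos (by norm_num)
    positivity
  rw [Nat.cast_sub hmn] at hτ
  subst hx hz hτ
  have hd1 : 0 < 2*(1/3:ℝ) + m'*y + n'*(2*m*y) := by positivity
  have hd2 : 0 < 2*(1/3:ℝ) + ((m:ℝ) - n)*y := by nlinarith
  rw [div_lt_div_iff₀ hd1 hd2]
  have h1 : (m:ℝ)*y ≤ (n':ℝ)*((m:ℝ)*y) := le_mul_of_one_le_left (by positivity) hn'R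
  have h2 : (m':ℝ)*y ≤ (m:ℝ)*y := mul_le_mul_of_nonneg_right hm'R hy0.le
  have h3 : (n:ℝ)*y ≤ (m:ℝ)*y := mul_le_mul_of_nonneg_right hnm hy0.le
  have h4 : y ≤ (m:ℝ)*y := le_mul_of_one_le_left hy0.le hmR
  have h5 : 0 ≤ (n':ℝ)*(2*(m:ℝ)*y)*(((m:ℝ)-(n:ℝ))*y) := by
    apply mul_nonneg (by positivity)
    exact mul_nonneg (by linarith) hy0.le
  nlinarith [h1, h2, h3, h4, h5, hy0]
end

section
/- Let (Ω, F, π) be a finite probability space where events need not have a common element. Then there exists R ⊆ F with π*(⋂R) > 0 and π*(E ∩ ⋂R)/π*(⋂R) = 1 if and only if there exists ω ∈ E with π(ω) > 0 such that the observation R_ω = {r ∈ F | ω ∈ r} satisfies π*(E ∩ ⋂R_ω)/π*(⋂R_ω) = 1. -/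
noncomputable def pstar {Ω : Type} [Fintype Ω] (π : Ω → ℝ) (S : Set Ω) : ℝ :=
  ∑ w : Ω, Set.indicator S π w

lemma pstar_pos_of {Ω : Type} [Fintype Ω] (π : Ω → ℝ) (h0 : ∀ w, 0 ≤ π w)
    {S : Set Ω} {w : Ω} (hw : w ∈ S) (hp : 0 < π w) : 0 < pstar π S := by
  have h1 : Set.indicator S π w = π w := Set.indicator_of_mem hw π
  calc (0:ℝ) < π w := hp
    _ = Set.indicator S π w := h1.symm
    _ ≤ ∑ v : Ω, Set.indicator S π v :=
      Finset.single_le_sum (fun v _ => Set.indicator_nonneg (fun x _ => h0 x) v)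
        (Finset.mem_univ w)

lemma pstar_split {Ω : Type} [Fintype Ω] (π : Ω → ℝ) (E S : Set Ω) :
    pstar π S = pstar π (E ∩ S) + pstar π (S \ E) := by
  classical
  unfold pstar
  rw [← Finset.sum_add_distrib]
  apply Finset.sum_congr rfl
  intro w _
  by_cases hS : w ∈ S
  · by_cases hE : w ∈ E
    · simp [Set.indicator, hS, hE]
    · simp [Set.indicator, hS, hE]
  · simp [Set.indicator, hS, fun h : w ∈ E ∩ S => hS h.2, fun h : w ∈ S \ E => hS h.1]

open scoped Classical in
theorem stmt_6 {Ω : Type} [Fintype Ω] (π : Ω → ℝ)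
    (h01 : ∀ w, 0 ≤ π w ∧ π w ≤ 1) (hsum : ∑ w : Ω, π w = 1)
    (F : Finset (Set Ω)) (E : Set Ω) :
    (∃ R : Finset (Set Ω), R ⊆ F ∧ 0 < pstar π (⋂ f ∈ R, f) ∧
        pstar π (E ∩ ⋂ f ∈ R, f) / pstar π (⋂ f ∈ R, f) = 1) ↔
      (∃ ω ∈ E, 0 < π ω ∧
        pstar π (E ∩ ⋂ f ∈ F.filter (fun r => ω ∈ r), f) /
          pstar π (⋂ f ∈ F.filter (fun r => ω ∈ r), f) = 1) := by
  have h0 : ∀ w, 0 ≤ π w := fun w => (h01 w).1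
  constructor
  · rintro ⟨R, hRF, hpos, hratio⟩
    set A := ⋂ f ∈ R, f with hA
    have hne : pstar π A ≠ 0 := ne_of_gt hpos
    have heq : pstar π (E ∩ A) = pstar π A := (div_eq_one_iff_eq hne).mp hratio
    have hdiff : pstar π (A \ E) = 0 := by
      have := pstar_split π E A; linarith
    have hzero : ∀ w, w ∈ A → w ∉ E → π w = 0 := by
      intro w hwA hwE
      have hind : Set.indicator (A \ E) π w = 0 :=
        (Finset.sum_eq_zero_iff_of_nonneg
          (fun v _ => Set.indicator_nonneg (fun x _ => h0 x) v)).mp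
          (by unfold pstar at hdiff; exact hdiff) w (Finset.mem_univ w)
      rwa [Set.indicator_of_mem (show w ∈ A \ E from ⟨hwA, hwE⟩)] at hind
    obtain ⟨ω, hωA, hωpos⟩ : ∃ ω, ω ∈ A ∧ 0 < π ω := by
      by_contra hc
      push_neg at hc
      have : pstar π A = 0 := by
        unfold pstar
        apply Finset.sum_eq_zero
        intro w _
        by_cases hw : w ∈ A
        · rw [Set.indicator_of_mem hw]
          exact le_antisymm (hc w hw) (h0 w)
        · exact Set.indicator_of_notMem hw π
      linarith
    have hωE : ω ∈ E := by
      by_contra h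
      exact absurd (hzero ω hωA h) (ne_of_gt hωpos)
    refine ⟨ω, hωE, hωpos, ?_⟩
    set B := ⋂ f ∈ F.filter (fun r => ω ∈ r), f with hB
    have hωB : ω ∈ B := by
      rw [hB]
      simp only [Set.mem_iInter]
      intro f hf
      exact (Finset.mem_filter.mp hf).2
    have hBA : B ⊆ A := by
      intro x hx
      rw [hA]
      rw [hB] at hx
      simp only [Set.mem_iInter] at hx ⊢
      intro f hf
      have hωf : ω ∈ f := by
        rw [hA] at hωA
        simp only [Set.mem_iInter] at hωA
        exact hωA f hf
      exact hx f (Finset.mem_filter.mpr ⟨hRF hf, hωf⟩)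
    have hBpos : 0 < pstar π B := pstar_pos_of π h0 hωB hωpos
    have hBdiff : pstar π (B \ E) = 0 := by
      unfold pstar
      apply Finset.sum_eq_zero
      intro w _
      by_cases hw : w ∈ B \ E
      · rw [Set.indicator_of_mem hw]
        exact hzero w (hBA hw.1) hw.2
      · exact Set.indicator_of_notMem hw π
    have hsplit := pstar_split π E B
    rw [div_eq_one_iff_eq (ne_of_gt hBpos)]
    linarith
  · rintro ⟨ω, hωE, hωpos, hratio⟩
    refine ⟨F.filter (fun r => ω ∈ r), Finset.filter_subset _ _, ?_, hratio⟩
    apply pstar_pos_of π h0 _ hωpos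
    simp only [Set.mem_iInter]
    intro f hf
    exact (Finset.mem_filter.mp hf).2
end

section
/- Strictness of Lemma 2's key inequality: for x = 1/3, y = (1-2x)/(m(1+2n)), z = 2my with m ≥ n ≥ 1, and any m' ≤ m, n' ≥ 1: (x + m'y)/(2x + m'y + n'z) < (x + my)/(2x + z). -/
theorem stmt_17 (m n m' n' : ℕ) (hn : 1 ≤ n) (hmn : n ≤ m)
    (hm' : m' ≤ m) (hn' : 1 ≤ n')
    (x y z : ℝ) (hx : x = 1/3)
    (hy : y = (1 - 2*x) / (m * (1 + 2*n)))
    (hz : z = 2*m*y) :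
    (x + m'*y) / (2*x + m'*y + n'*z) < (x + m*y) / (2*x + z) := by
  have hm1 : (1:ℝ) ≤ (m:ℝ) := by exact_mod_cast le_trans hn hmn
  have hn1 : (1:ℝ) ≤ (n:ℝ) := by exact_mod_cast hn
  have hmpos : (0:ℝ) < (m:ℝ) := by linarith
  have hy0 : 0 < y := by
    rw [hy, hx]
    apply div_pos (by norm_num)
    apply mul_pos hmpos (by positivity)
  have hmy : (m:ℝ)*y = (1/3)/(1+2*(n:ℝ)) := by
    rw [hy, hx]; field_simp; ring
  have hmyle : (m:ℝ)*y ≤ 1/3 := by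
    rw [hmy, div_le_iff₀ (by linarith)]; linarith
  have hm'y : (m':ℝ)*y ≤ (m:ℝ)*y := by
    apply mul_le_mul_of_nonneg_right (by exact_mod_cast hm') hy0.le
  have hm'0 : (0:ℝ) ≤ (m':ℝ)*y := by positivity
  have hz0 : 0 < z := by rw [hz]; positivity
  have hn'z : z ≤ (n':ℝ)*z := by
    nlinarith [(by exact_mod_cast hn' : (1:ℝ) ≤ (n':ℝ))]
  have hmy0 : 0 < (m:ℝ)*y := by positivity
  have d1 : 0 < 2*x + (m':ℝ)*y + (n':ℝ)*z := by
    rw [hx]; nlinarith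
  have d2 : 0 < 2*x + z := by rw [hx]; nlinarith
  rw [div_lt_div_iff₀ d1 d2]
  nlinarith [mul_pos hmy0 (show 0 < x - (m':ℝ)*y + (n':ℝ)*z by nlinarith),
    mul_nonneg (show (0:ℝ) ≤ x by rw [hx]; norm_num) (sub_nonneg.2 hn'z),
    mul_nonneg (show (0:ℝ) ≤ x by rw [hx]; norm_num) (sub_nonneg.2 hm'y)]
end
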